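/- arXiv:1903.07451 — 2 statements merged into one kernel-verified Lean document; each statement's English description precedes it below -/
import Mathlib

section
/- Suppose α < |a|_p = β and |a-d|_p < α for f(x)=(ax²+bx)/(x²+dx+b) on ℂ_p. Then the fixed point x₂ = a-d is indifferent (|f'(x₂)|_p = 1) and its Siegel disk equals the Siegel disk of 0, namely U_α(0): for every x with 0 < |x - x₂|_p < α one has |f(x)-x₂|_p = |x-x₂|_p. -/
/-!
Writing `x₂ = a - d`, one has `f x - x₂ = (x - x₂) · g x` with `g x = (d x + b) / (x² + d x + b)`,
so `f' x₂ = g x₂`. Since `x² + d x + b = (x - z₁)(x - z₂)` with `|z₁| < |z₂|`, on the disk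
`|x| < |z₁|` both `d x + b` and the denominator have norm `|b| = |z₁| |z₂|`, so `|g| = 1` there.
Every point of an ultrametric disk is a centre of it, so `|x - x₂| < |z₁|` is that same disk.
-/

open Filter Topology

section Ultrametric

variable {K : Type*} [NormedField K] [IsUltrametricDist K]

lemma norm_add_eq_left_of_norm_lt {x y : K} (h : ‖y‖ < ‖x‖) : ‖x + y‖ = ‖x‖ := by
  rw [IsUltrametricDist.norm_add_eq_max_of_norm_ne_norm h.ne', max_eq_left h.le]

lemma norm_sub_eq_right_of_norm_lt {x y : K} (h : ‖x‖ < ‖y‖) : ‖x - y‖ = ‖y‖ := by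
  rw [← norm_neg, neg_sub, sub_eq_add_neg, norm_add_eq_left_of_norm_lt (by rwa [norm_neg])]

variable {b d z₁ z₂ x : K}

lemma norm_sq_add_mul_add_eq_of_roots (hsum : z₁ + z₂ = -d) (hprod : z₁ * z₂ = b)
    (hz : ‖z₁‖ < ‖z₂‖) (hx : ‖x‖ < ‖z₁‖) : ‖x ^ 2 + d * x + b‖ = ‖b‖ := by
  have hfactor : x ^ 2 + d * x + b = (x - z₁) * (x - z₂) := by
    linear_combination x * hsum - hprod
  rw [hfactor, ← hprod, norm_mul, norm_mul, norm_sub_eq_right_of_norm_lt hx,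
    norm_sub_eq_right_of_norm_lt (hx.trans hz)]

lemma sq_add_mul_add_ne_zero_of_roots (hsum : z₁ + z₂ = -d) (hprod : z₁ * z₂ = b)
    (hz : ‖z₁‖ < ‖z₂‖) (hx : ‖x‖ < ‖z₁‖) : x ^ 2 + d * x + b ≠ 0 := by
  rw [← norm_pos_iff, norm_sq_add_mul_add_eq_of_roots hsum hprod hz hx, ← hprod, norm_mul]
  exact mul_pos ((norm_nonneg x).trans_lt hx) ((norm_nonneg x).trans_lt (hx.trans hz))

lemma norm_mul_add_eq_of_roots (hsum : z₁ + z₂ = -d) (hprod : z₁ * z₂ = b)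
    (hz : ‖z₁‖ < ‖z₂‖) (hx : ‖x‖ < ‖z₁‖) : ‖d * x + b‖ = ‖b‖ := by
  have hd : ‖d‖ = ‖z₂‖ := by
    rw [← norm_neg d, ← hsum, add_comm, norm_add_eq_left_of_norm_lt hz]
  have hb : ‖b‖ = ‖z₁‖ * ‖z₂‖ := by rw [← hprod, norm_mul]
  rw [add_comm, norm_add_eq_left_of_norm_lt]
  rw [norm_mul, hd, hb, mul_comm]
  exact mul_lt_mul_of_pos_right hx ((norm_nonneg x).trans_lt (hx.trans hz))

end Ultrametric

lemma div_sub_eq_sub_mul_div {K : Type*} [Field K] {a b d x : K} (hD : x ^ 2 + d * x + b ≠ 0) :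
    (a * x ^ 2 + b * x) / (x ^ 2 + d * x + b) - (a - d) =
      (x - (a - d)) * ((d * x + b) / (x ^ 2 + d * x + b)) := by
  rw [← mul_div_assoc, eq_div_iff hD, sub_mul, div_mul_cancel₀ _ hD]
  ring

lemma hasDerivAt_of_eventually_eq_add_sub_mul {𝕜 : Type*} [NontriviallyNormedField 𝕜]
    {f g : 𝕜 → 𝕜} {c y : 𝕜} (hf : ∀ᶠ x in 𝓝 c, f x = y + (x - c) * g x)
    (hg : ContinuousAt g c) : HasDerivAt f (g c) c := by
  obtain rfl : f c = y := by simpa using hf.self_of_nhds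
  rw [hasDerivAt_iff_tendsto_slope]
  refine (hg.tendsto.mono_left nhdsWithin_le_nhds).congr' ?_
  filter_upwards [nhdsWithin_le_nhds hf, self_mem_nhdsWithin] with x hfx hx
  rw [slope_def_field, hfx, add_sub_cancel_left, mul_div_cancel_left₀ _ (sub_ne_zero.mpr hx)]

theorem stmt14_general {K : Type*} [NontriviallyNormedField K]
    [IsUltrametricDist K] (a b d z₁ z₂ : K)
    (hsum : z₁ + z₂ = -d) (hprod : z₁ * z₂ = b)
    (hαa : ‖z₁‖ < ‖a‖) (haβ : ‖a‖ = ‖z₂‖) (hx₂ : ‖a - d‖ < ‖z₁‖) :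
    (∃ L : K, HasDerivAt (fun x : K => (a*x^2 + b*x)/(x^2 + d*x + b)) L (a - d) ∧
      ‖L‖ = 1) ∧
    ∀ x : K, 0 < ‖x - (a - d)‖ → ‖x - (a - d)‖ < ‖z₁‖ →
      ‖(a*x^2 + b*x)/(x^2 + d*x + b) - (a - d)‖ = ‖x - (a - d)‖ := by
  have hz : ‖z₁‖ < ‖z₂‖ := haβ ▸ hαa
  have hD (x : K) (hx : ‖x‖ < ‖z₁‖) : x ^ 2 + d * x + b ≠ 0 :=
    sq_add_mul_add_ne_zero_of_roots hsum hprod hz hx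
  have hg (x : K) (hx : ‖x‖ < ‖z₁‖) : ‖(d * x + b) / (x ^ 2 + d * x + b)‖ = 1 := by
    rw [norm_div, norm_mul_add_eq_of_roots hsum hprod hz hx,
      ← norm_sq_add_mul_add_eq_of_roots hsum hprod hz hx, div_self (norm_ne_zero_iff.mpr (hD x hx))]
  have hx₂_mem : a - d ∈ Metric.ball 0 ‖z₁‖ := by simpa using hx₂
  refine ⟨⟨_, ?_, hg _ hx₂⟩, fun x _ hx => ?_⟩
  · refine hasDerivAt_of_eventually_eq_add_sub_mul (y := a - d)
      (g := fun x => (d * x + b) / (x ^ 2 + d * x + b)) ?_ (by fun_prop (disch := exact hD _ hx₂))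
    filter_upwards [Metric.isOpen_ball.mem_nhds hx₂_mem] with x hx
    rw [← div_sub_eq_sub_mul_div (hD x (by simpa using hx)), add_sub_cancel]
  · have hx_mem : x ∈ Metric.ball 0 ‖z₁‖ :=
      IsUltrametricDist.ball_eq_of_mem hx₂_mem ▸ by simpa [dist_eq_norm] using hx
    replace hx_mem : ‖x‖ < ‖z₁‖ := by simpa using hx_mem
    rw [div_sub_eq_sub_mul_div (hD x hx_mem), norm_mul, hg x hx_mem, mul_one]

/-- Case `α < |a| = β` with `|a-d| < α`: the fixed point `x₂ = a - d` is
indifferent (`|f'(x₂)| = 1`) and its Siegel disk equals the Siegel disk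
`U_α(0)` of `0`: `|f(x) - x₂| = |x - x₂|` whenever `0 < |x - x₂| < α`. -/
theorem stmt14 {K : Type*} [NontriviallyNormedField K] [IsAlgClosed K]
    [IsUltrametricDist K] (a b d z₁ z₂ : K) (hab : a*b ≠ 0) (had : a ≠ d)
    (hsum : z₁ + z₂ = -d) (hprod : z₁ * z₂ = b)
    (hαa : ‖z₁‖ < ‖a‖) (haβ : ‖a‖ = ‖z₂‖) (hx₂ : ‖a - d‖ < ‖z₁‖) :
    (∃ L : K, HasDerivAt (fun x : K => (a*x^2 + b*x)/(x^2 + d*x + b)) L (a - d) ∧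
      ‖L‖ = 1) ∧
    ∀ x : K, 0 < ‖x - (a - d)‖ → ‖x - (a - d)‖ < ‖z₁‖ →
      ‖(a*x^2 + b*x)/(x^2 + d*x + b) - (a - d)‖ = ‖x - (a - d)‖ :=
  stmt14_general a b d z₁ z₂ hsum hprod hαa haβ hx₂
end

section
/- Let I be the union of the invariant radii: (0,α) if |a|_p < β; (0,α)∪(α,β) if |a|_p = β; (0, αβ/|a|_p) if |a|_p > β (where α ≤ β). For any r ∈ I, any closed ball V_ρ(c) contained in S_r(0), and any x,y ∈ V_ρ(c), one has |f(x)-f(y)|_p = |x-y|_p; hence f(V_ρ(c)) = V_ρ(f(c)). -/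
/-!
On a sphere `‖x‖ = r` with `r` an invariant radius one term dominates each polynomial in sight:
the constant term `b` when `r < ‖z₁‖`, the linear term `d x` when `‖z₁‖ < r < ‖z₂‖ = ‖a‖`.
Hence `x² + d x + b`, `a x + b` and the numerator `a d x y + a b (x + y) - b x y + b²` of
`f x - f y` have norms `M`, `M`, `M²` for one constant `M`, and the key identity makes `f` an
isometry of the sphere into itself. It is onto, since `f t = w` is the quadratic
`(a - w) t² + (b - d w) t - b w = 0`, whose Newton polygon forces a root of norm `r`. In an
ultrametric space a closed ball of radius `ρ < r` about a point of the sphere lies in the sphere,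
so such an isometry maps `V_ρ(c)` onto `V_ρ(f c)`.
-/

open Metric Set

namespace IsUltrametricDist

section AddGroup

variable {S : Type*} [SeminormedAddGroup S] [IsUltrametricDist S] {x y : S} {C : ℝ}

lemma norm_add_eq_left_of_lt (h : ‖y‖ < ‖x‖) : ‖x + y‖ = ‖x‖ := by
  rw [norm_add_eq_max_of_norm_ne_norm h.ne', max_eq_left h.le]

lemma norm_sub_eq_left_of_lt (h : ‖y‖ < ‖x‖) : ‖x - y‖ = ‖x‖ := by
  rw [sub_eq_add_neg]
  exact norm_add_eq_left_of_lt (by rwa [norm_neg])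

lemma norm_sub_le_max (x y : S) : ‖x - y‖ ≤ max ‖x‖ ‖y‖ := by
  simpa [sub_eq_add_neg] using norm_add_le_max x (-y)

lemma norm_add_lt_of_lt (hx : ‖x‖ < C) (hy : ‖y‖ < C) : ‖x + y‖ < C :=
  (norm_add_le_max x y).trans_lt (max_lt hx hy)

lemma norm_sub_lt_of_lt (hx : ‖x‖ < C) (hy : ‖y‖ < C) : ‖x - y‖ < C :=
  (norm_sub_le_max x y).trans_lt (max_lt hx hy)

end AddGroup

variable {E : Type*} [SeminormedAddCommGroup E] [IsUltrametricDist E] {c : E} {ρ : ℝ}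

lemma norm_eq_of_norm_sub_lt {x : E} (h : ‖x - c‖ < ‖c‖) : ‖x‖ = ‖c‖ := by
  rw [← add_sub_cancel c x]
  exact norm_add_eq_left_of_lt h

lemma closedBall_subset_sphere (hρ : ρ < ‖c‖) : closedBall c ρ ⊆ sphere 0 ‖c‖ := fun x hx => by
  rw [mem_sphere_zero_iff_norm]
  exact norm_eq_of_norm_sub_lt ((mem_closedBall_iff_norm.1 hx).trans_lt hρ)

end IsUltrametricDist

open IsUltrametricDist

section QuadraticRoots

variable {K : Type*} [NormedField K] [IsUltrametricDist K]

lemma norm_eq_of_add_eq_of_mul_eq {u v p q : K} (hsum : u + v = -p) (hprod : u * v = q)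
    (hpq : ‖q‖ < ‖p‖ ^ 2) (huv : ‖u‖ ≤ ‖v‖) : ‖u‖ = ‖q‖ / ‖p‖ := by
  have hp : ‖p‖ ≤ ‖v‖ := by
    rw [← norm_neg p, ← hsum]
    exact (norm_add_le_max u v).trans (max_le huv le_rfl)
  have hlt : ‖u‖ < ‖v‖ := by
    rw [← hprod, norm_mul] at hpq
    nlinarith [norm_nonneg u, norm_nonneg p]
  have hv : ‖p‖ = ‖v‖ := by
    rw [← norm_neg p, ← hsum, add_comm, norm_add_eq_left_of_lt hlt]
  rw [← hprod, norm_mul, hv, mul_div_cancel_right₀ _ (by linarith [norm_nonneg u])]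

variable [IsAlgClosed K]

theorem exists_root_norm_eq_of_lt (A B C : K) (h : ‖A‖ * ‖C‖ < ‖B‖ ^ 2) :
    ∃ t, A * t ^ 2 + B * t + C = 0 ∧ ‖t‖ = ‖C‖ / ‖B‖ := by
  have hB : B ≠ 0 := by
    rintro rfl
    rw [norm_zero] at h
    nlinarith [norm_nonneg A, norm_nonneg C]
  rcases eq_or_ne A 0 with rfl | hA
  · exact ⟨-C / B, by field_simp; ring, by rw [norm_div, norm_neg]⟩
  have hmonic : ∀ t, A * t ^ 2 + B * t + C = A * (t ^ 2 + B / A * t + C / A) := fun t => by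
    field_simp
  obtain ⟨s, hs⟩ := IsAlgClosed.exists_root
    (Polynomial.C 1 * Polynomial.X ^ 2 + Polynomial.C (B / A) * Polynomial.X +
      Polynomial.C (C / A)) (by rw [Polynomial.degree_quadratic one_ne_zero]; norm_num)
  replace hs : s ^ 2 + B / A * s + C / A = 0 := by simpa using hs
  have hs' : (-(B / A) - s) ^ 2 + B / A * (-(B / A) - s) + C / A = 0 := by
    linear_combination hs
  have hsum : s + (-(B / A) - s) = -(B / A) := by ring
  have hprod : s * (-(B / A) - s) = C / A := by linear_combination -hs
  have hpq : ‖C / A‖ < ‖B / A‖ ^ 2 := by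
    rw [norm_div, norm_div, div_pow, div_lt_div_iff₀ (norm_pos_iff.2 hA) (by positivity)]
    nlinarith [norm_pos_iff.2 hA]
  have hnorm : ‖C / A‖ / ‖B / A‖ = ‖C‖ / ‖B‖ := by
    rw [norm_div, norm_div, div_div_div_cancel_right₀ (norm_ne_zero_iff.2 hA)]
  rcases le_total ‖s‖ ‖-(B / A) - s‖ with hle | hle
  · exact ⟨s, by rw [hmonic, hs, mul_zero], hnorm ▸ norm_eq_of_add_eq_of_mul_eq hsum hprod hpq hle⟩
  · refine ⟨-(B / A) - s, by rw [hmonic, hs', mul_zero], hnorm ▸ ?_⟩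
    exact norm_eq_of_add_eq_of_mul_eq (by rw [add_comm, hsum]) (by rw [mul_comm, hprod]) hpq hle

theorem exists_root_norm_eq_of_lt' {A : K} (B C : K) (hA : A ≠ 0) (h : ‖A‖ * ‖C‖ < ‖B‖ ^ 2) :
    ∃ t, A * t ^ 2 + B * t + C = 0 ∧ ‖t‖ = ‖B‖ / ‖A‖ := by
  -- `t ↦ t⁻¹` reverses the coefficients
  obtain ⟨s, hs, hsn⟩ := exists_root_norm_eq_of_lt C B A (by rwa [mul_comm])
  have hs0 : s ≠ 0 := by
    rintro rfl
    exact hA (by simpa using hs)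
  refine ⟨s⁻¹, ?_, by rw [norm_inv, hsn, inv_div]⟩
  field_simp
  linear_combination hs

end QuadraticRoots

section SphereIsometry

variable {E : Type*} [SeminormedAddCommGroup E]

structure IsometricOnSphere (f : E → E) (r : ℝ) : Prop where
  norm_sub : ∀ x ∈ sphere (0 : E) r, ∀ y ∈ sphere (0 : E) r, ‖f x - f y‖ = ‖x - y‖
  mapsTo : MapsTo f (sphere 0 r) (sphere 0 r)
  surjOn : SurjOn f (sphere 0 r) (sphere 0 r)

variable [IsUltrametricDist E]

theorem IsometricOnSphere.image_closedBall {f : E → E} {r ρ : ℝ} {c : E}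
    (hf : IsometricOnSphere f r) (hc : ‖c‖ = r) (hρ : ρ < r) :
    f '' closedBall c ρ = closedBall (f c) ρ := by
  have hcS : c ∈ sphere (0 : E) r := mem_sphere_zero_iff_norm.2 hc
  have hfc : ‖f c‖ = r := mem_sphere_zero_iff_norm.1 (hf.mapsTo hcS)
  ext w
  constructor
  · rintro ⟨x, hx, rfl⟩
    have hxS : x ∈ sphere (0 : E) r := hc ▸ closedBall_subset_sphere (hc ▸ hρ) hx
    rwa [mem_closedBall_iff_norm, hf.norm_sub x hxS c hcS, ← mem_closedBall_iff_norm]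
  · intro hw
    obtain ⟨t, htS, rfl⟩ := hf.surjOn (hfc ▸ closedBall_subset_sphere (hfc ▸ hρ) hw)
    refine ⟨t, ?_, rfl⟩
    rwa [mem_closedBall_iff_norm, ← hf.norm_sub t htS c hcS, ← mem_closedBall_iff_norm]

end SphereIsometry

section RationalMap

variable {K : Type*} [NormedField K] {a b d x y t w : K}

def ratMap (a b d x : K) : K := (a * x ^ 2 + b * x) / (x ^ 2 + d * x + b)

lemma ratMap_sub_ratMap (hx : x ^ 2 + d * x + b ≠ 0) (hy : y ^ 2 + d * y + b ≠ 0) :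
    ratMap a b d x - ratMap a b d y =
      (x - y) * (a * d * x * y + a * b * (x + y) - b * x * y + b ^ 2) /
        ((x ^ 2 + d * x + b) * (y ^ 2 + d * y + b)) := by
  rw [ratMap, ratMap, div_sub_div _ _ hx hy]
  ring

lemma ratMap_eq_of_root (ht : t ^ 2 + d * t + b ≠ 0)
    (hroot : (a - w) * t ^ 2 + (b - d * w) * t + -b * w = 0) : ratMap a b d t = w := by
  rw [ratMap, div_eq_iff ht]
  linear_combination hroot

theorem isometricOnSphere_ratMap {r M : ℝ} (hM : 0 < M)
    (hden : ∀ x : K, ‖x‖ = r → ‖x ^ 2 + d * x + b‖ = M)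
    (hnum : ∀ x y : K, ‖x‖ = r → ‖y‖ = r →
      ‖a * d * x * y + a * b * (x + y) - b * x * y + b ^ 2‖ = M ^ 2)
    (hlin : ∀ x : K, ‖x‖ = r → ‖a * x + b‖ = M)
    (hroot : ∀ w : K, ‖w‖ = r → ∃ t, ‖t‖ = r ∧ (a - w) * t ^ 2 + (b - d * w) * t + -b * w = 0) :
    IsometricOnSphere (ratMap a b d) r := by
  have hden0 : ∀ x : K, ‖x‖ = r → x ^ 2 + d * x + b ≠ 0 := fun x hx =>
    norm_pos_iff.1 (hden x hx ▸ hM)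
  refine ⟨fun x hx y hy => ?_, fun x hx => ?_, fun w hw => ?_⟩
  · rw [mem_sphere_zero_iff_norm] at hx hy
    rw [ratMap_sub_ratMap (hden0 x hx) (hden0 y hy), norm_div, norm_mul, norm_mul, hnum x y hx hy,
      hden x hx, hden y hy, sq, mul_div_cancel_right₀ _ (by positivity)]
  · rw [mem_sphere_zero_iff_norm] at hx ⊢
    rw [ratMap, norm_div, hden x hx, show a * x ^ 2 + b * x = x * (a * x + b) by ring, norm_mul,
      hlin x hx, hx, mul_div_cancel_right₀ _ hM.ne']
  · rw [mem_sphere_zero_iff_norm] at hw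
    obtain ⟨t, ht, htw⟩ := hroot w hw
    exact ⟨t, mem_sphere_zero_iff_norm.2 ht, ratMap_eq_of_root (hden0 t ht) htw⟩

variable [IsUltrametricDist K] {r : ℝ}

lemma norm_crossNum_of_const_dominant (hrr : r * r < ‖b‖) (hra : r * ‖a‖ < ‖b‖)
    (hrd : r * ‖d‖ < ‖b‖) (hx : ‖x‖ = r) (hy : ‖y‖ = r) :
    ‖a * d * x * y + a * b * (x + y) - b * x * y + b ^ 2‖ = ‖b‖ ^ 2 := by
  have hr : 0 ≤ r := hx ▸ norm_nonneg x
  have hb : 0 < ‖b‖ := (mul_self_nonneg r).trans_lt hrr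
  have hadxy : ‖a * d * x * y‖ < ‖b‖ ^ 2 := by
    rw [norm_mul, norm_mul, norm_mul, hx, hy]
    nlinarith [mul_lt_mul'' hra hrd (by positivity) (by positivity)]
  have habxy : ‖a * b * (x + y)‖ < ‖b‖ ^ 2 := calc
    ‖a * b * (x + y)‖ ≤ ‖a‖ * ‖b‖ * r := by
      rw [norm_mul, norm_mul]
      gcongr
      exact (norm_add_le_max x y).trans (by rw [hx, hy, max_self])
    _ < ‖b‖ ^ 2 := by nlinarith
  have hbxy : ‖b * x * y‖ < ‖b‖ ^ 2 := by
    rw [norm_mul, norm_mul, hx, hy]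
    nlinarith
  have hrest : ‖a * d * x * y + a * b * (x + y) - b * x * y‖ < ‖b ^ 2‖ :=
    norm_pow b 2 ▸ norm_sub_lt_of_lt (norm_add_lt_of_lt hadxy habxy) hbxy
  rw [show a * d * x * y + a * b * (x + y) - b * x * y + b ^ 2
      = b ^ 2 + (a * d * x * y + a * b * (x + y) - b * x * y) by ring,
    norm_add_eq_left_of_lt hrest, norm_pow]

theorem isometricOnSphere_ratMap_of_const_dominant [IsAlgClosed K]
    (hrr : r * r < ‖b‖) (hra : r * ‖a‖ < ‖b‖) (hrd : r * ‖d‖ < ‖b‖) :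
    IsometricOnSphere (ratMap a b d) r := by
  have hb : 0 < ‖b‖ := (mul_self_nonneg r).trans_lt hrr
  refine isometricOnSphere_ratMap hb (fun x hx => ?_)
    (fun x y hx hy => norm_crossNum_of_const_dominant hrr hra hrd hx hy) (fun x hx => ?_)
    (fun w hw => ?_)
  · have hr : 0 ≤ r := hx ▸ norm_nonneg x
    have hxd : ‖x * (x + d)‖ < ‖b‖ := calc
      ‖x * (x + d)‖ ≤ r * max r ‖d‖ := by
        rw [norm_mul, hx]
        gcongr
        exact hx ▸ norm_add_le_max x d
      _ < ‖b‖ := by rw [mul_max_of_nonneg _ _ hr]; exact max_lt hrr hrd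
    rw [show x ^ 2 + d * x + b = b + x * (x + d) by ring, norm_add_eq_left_of_lt hxd]
  · rw [add_comm, norm_add_eq_left_of_lt (by rwa [norm_mul, hx, mul_comm])]
  · have hr : 0 ≤ r := hw ▸ norm_nonneg w
    have hB : ‖b - d * w‖ = ‖b‖ := norm_sub_eq_left_of_lt (by rwa [norm_mul, hw, mul_comm])
    have haw : r * ‖a - w‖ < ‖b‖ := calc
      r * ‖a - w‖ ≤ r * max ‖a‖ r := by gcongr; exact hw ▸ norm_sub_le_max a w
      _ < ‖b‖ := by rw [mul_max_of_nonneg _ _ hr]; exact max_lt hra hrr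
    obtain ⟨t, hroot, ht⟩ := exists_root_norm_eq_of_lt (a - w) (b - d * w) (-b * w) (by
      rw [hB, norm_mul, norm_neg, hw]
      nlinarith)
    refine ⟨t, ?_, hroot⟩
    rw [ht, hB, norm_mul, norm_neg, hw, mul_div_cancel_left₀ _ hb.ne']

lemma norm_crossNum_of_linear_dominant (had : ‖a‖ = ‖d‖) (hrd : r < ‖d‖)
    (hbr : ‖b‖ < r * ‖d‖) (hx : ‖x‖ = r) (hy : ‖y‖ = r) :
    ‖a * d * x * y + a * b * (x + y) - b * x * y + b ^ 2‖ = (r * ‖d‖) ^ 2 := by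
  have hM : 0 < r * ‖d‖ := (norm_nonneg b).trans_lt hbr
  have hr : 0 < r := by nlinarith [norm_nonneg d]
  have hadxy : ‖a * d * x * y‖ = (r * ‖d‖) ^ 2 := by
    rw [norm_mul, norm_mul, norm_mul, hx, hy, had]
    ring
  have habxy : ‖a * b * (x + y)‖ < (r * ‖d‖) ^ 2 := calc
    ‖a * b * (x + y)‖ ≤ ‖d‖ * ‖b‖ * r := by
      rw [norm_mul, norm_mul, had]
      gcongr
      exact (norm_add_le_max x y).trans (by rw [hx, hy, max_self])
    _ < (r * ‖d‖) ^ 2 := by nlinarith [mul_lt_mul_of_pos_left hbr (mul_pos (hr.trans hrd) hr)]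
  have hbxy : ‖b * x * y‖ < (r * ‖d‖) ^ 2 := by
    rw [norm_mul, norm_mul, hx, hy]
    nlinarith [mul_lt_mul_of_pos_right hbr (mul_pos hr hr),
      mul_lt_mul_of_pos_left hrd (mul_pos hM hr)]
  have hbb : ‖b ^ 2‖ < (r * ‖d‖) ^ 2 := by
    rw [norm_pow]
    exact pow_lt_pow_left₀ hbr (norm_nonneg b) two_ne_zero
  rw [show a * d * x * y + a * b * (x + y) - b * x * y + b ^ 2
      = a * d * x * y + (a * b * (x + y) - b * x * y + b ^ 2) by ring,
    norm_add_eq_left_of_lt (hadxy ▸ norm_add_lt_of_lt (norm_sub_lt_of_lt habxy hbxy) hbb), hadxy]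

theorem isometricOnSphere_ratMap_of_linear_dominant [IsAlgClosed K]
    (had : ‖a‖ = ‖d‖) (hrd : r < ‖d‖) (hbr : ‖b‖ < r * ‖d‖) :
    IsometricOnSphere (ratMap a b d) r := by
  have hM : 0 < r * ‖d‖ := (norm_nonneg b).trans_lt hbr
  have hr : 0 < r := by nlinarith [norm_nonneg d]
  have hd : 0 < ‖d‖ := hr.trans hrd
  refine isometricOnSphere_ratMap hM (fun x hx => ?_)
    (fun x y hx hy => norm_crossNum_of_linear_dominant had hrd hbr hx hy) (fun x hx => ?_)
    (fun w hw => ?_)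
  · have hdx : ‖d * x‖ = r * ‖d‖ := by rw [norm_mul, hx, mul_comm]
    have hxb : ‖x ^ 2 + b‖ < ‖d * x‖ :=
      hdx ▸ norm_add_lt_of_lt (by rw [norm_pow, hx]; nlinarith) hbr
    rw [show x ^ 2 + d * x + b = d * x + (x ^ 2 + b) by ring, norm_add_eq_left_of_lt hxb, hdx]
  · have hax : ‖a * x‖ = r * ‖d‖ := by rw [norm_mul, hx, had, mul_comm]
    rw [norm_add_eq_left_of_lt (hax ▸ hbr), hax]
  · have hA : ‖a - w‖ = ‖d‖ := by rw [norm_sub_eq_left_of_lt (by rwa [hw, had]), had]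
    have hdw : ‖d * w‖ = r * ‖d‖ := by rw [norm_mul, hw, mul_comm]
    have hB : ‖b - d * w‖ = r * ‖d‖ := by
      rw [norm_sub_rev, norm_sub_eq_left_of_lt (hdw ▸ hbr), hdw]
    obtain ⟨t, hroot, ht⟩ := exists_root_norm_eq_of_lt' (b - d * w) (-b * w)
      (norm_pos_iff.1 (hA ▸ hd)) (by
        rw [hA, hB, norm_mul, norm_neg, hw]
        nlinarith)
    refine ⟨t, ?_, hroot⟩
    rw [ht, hA, hB, mul_div_cancel_right₀ _ hd.ne']

end RationalMap

section InvariantRadii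

variable {K : Type*} [NormedField K] [IsUltrametricDist K] {a b d z₁ z₂ : K} {r : ℝ}

def invariantRadii (a z₁ z₂ : K) : Set ℝ :=
  if ‖a‖ < ‖z₂‖ then Ioo 0 ‖z₁‖
  else if ‖a‖ = ‖z₂‖ then Ioo 0 ‖z₁‖ ∪ Ioo ‖z₁‖ ‖z₂‖
  else Ioo 0 (‖z₁‖ * ‖z₂‖ / ‖a‖)

theorem pos_and_dominant_of_mem_invariantRadii (hb : b ≠ 0) (hsum : z₁ + z₂ = -d)
    (hprod : z₁ * z₂ = b) (hαβ : ‖z₁‖ ≤ ‖z₂‖) (hr : r ∈ invariantRadii a z₁ z₂) :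
    0 < r ∧ ((r * r < ‖b‖ ∧ r * ‖a‖ < ‖b‖ ∧ r * ‖d‖ < ‖b‖) ∨
      (‖a‖ = ‖d‖ ∧ r < ‖d‖ ∧ ‖b‖ < r * ‖d‖)) := by
  have hα : 0 < ‖z₁‖ := norm_pos_iff.2 (left_ne_zero_of_mul (hprod ▸ hb))
  have hbn : ‖b‖ = ‖z₁‖ * ‖z₂‖ := by rw [← hprod, norm_mul]
  have hd : d = -(z₁ + z₂) := by rw [hsum, neg_neg]
  have hdle : ‖d‖ ≤ ‖z₂‖ := by
    rw [hd, norm_neg]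
    exact (norm_add_le_max _ _).trans (max_le hαβ le_rfl)
  have const_dominant (h0 : 0 < r) (hrα : r < ‖z₁‖) (hra : r * ‖a‖ < ‖b‖) :
      r * r < ‖b‖ ∧ r * ‖a‖ < ‖b‖ ∧ r * ‖d‖ < ‖b‖ :=
    ⟨by rw [hbn]; nlinarith, hra, by rw [hbn]; nlinarith [mul_le_mul_of_nonneg_left hdle h0.le]⟩
  unfold invariantRadii at hr
  split_ifs at hr with hlt heq
  · exact ⟨hr.1, Or.inl (const_dominant hr.1 hr.2 (by rw [hbn]; nlinarith [hr.1, hr.2]))⟩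
  · rcases hr with hr | hr
    · exact ⟨hr.1, Or.inl (const_dominant hr.1 hr.2 (by rw [hbn, heq]; nlinarith [hr.1, hr.2]))⟩
    · have hdβ : ‖d‖ = ‖z₂‖ := by
        rw [hd, norm_neg, add_comm, norm_add_eq_left_of_lt (hr.1.trans hr.2)]
      refine ⟨hα.trans hr.1, Or.inr ⟨heq.trans hdβ.symm, hdβ ▸ hr.2, ?_⟩⟩
      rw [hbn, hdβ]
      exact mul_lt_mul_of_pos_right hr.1 (hα.trans (hr.1.trans hr.2))
  · have hβa : ‖z₂‖ < ‖a‖ := lt_of_le_of_ne (not_lt.1 hlt) (Ne.symm heq)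
    have hra : r * ‖a‖ < ‖b‖ := by
      rw [hbn]; exact (lt_div_iff₀ (hα.trans_le (hαβ.trans hβa.le))).1 hr.2
    exact ⟨hr.1, Or.inl (const_dominant hr.1 (by rw [hbn] at hra; nlinarith [hr.1]) hra)⟩

end InvariantRadii

theorem stmt16_general {K : Type*} [NontriviallyNormedField K] [IsAlgClosed K]
    [IsUltrametricDist K] (a b d z₁ z₂ : K) (hab : a*b ≠ 0)
    (hsum : z₁ + z₂ = -d) (hprod : z₁ * z₂ = b) (hαβ : ‖z₁‖ ≤ ‖z₂‖)
    (r ρ : ℝ) (c : K)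
    (hr : r ∈ (if ‖a‖ < ‖z₂‖ then Set.Ioo (0:ℝ) ‖z₁‖
      else if ‖a‖ = ‖z₂‖ then Set.Ioo (0:ℝ) ‖z₁‖ ∪ Set.Ioo ‖z₁‖ ‖z₂‖
      else Set.Ioo (0:ℝ) (‖z₁‖*‖z₂‖/‖a‖)))
    (hc : ‖c‖ = r) (hsub : ∀ x : K, ‖x - c‖ ≤ ρ → ‖x‖ = r) :
    (∀ x y : K, ‖x - c‖ ≤ ρ → ‖y - c‖ ≤ ρ →
      ‖(a*x^2 + b*x)/(x^2 + d*x + b) - (a*y^2 + b*y)/(y^2 + d*y + b)‖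
        = ‖x - y‖) ∧
    (fun x : K => (a*x^2 + b*x)/(x^2 + d*x + b)) '' Metric.closedBall c ρ
      = Metric.closedBall ((a*c^2 + b*c)/(c^2 + d*c + b)) ρ := by
  obtain ⟨hr0, hdominant⟩ :=
    pos_and_dominant_of_mem_invariantRadii (right_ne_zero_of_mul hab) hsum hprod hαβ hr
  have hf : IsometricOnSphere (ratMap a b d) r := by
    rcases hdominant with ⟨hrr, hra, hrd⟩ | ⟨had, hrd, hbr⟩
    · exact isometricOnSphere_ratMap_of_const_dominant hrr hra hrd
    · exact isometricOnSphere_ratMap_of_linear_dominant had hrd hbr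
  have hρ : ρ < r := by
    by_contra! h
    have h0 := hsub 0 (by rwa [zero_sub, norm_neg, hc])
    exact hr0.ne' (by rwa [norm_zero, eq_comm] at h0)
  refine ⟨fun x y hx hy => ?_, hf.image_closedBall hc hρ⟩
  exact hf.norm_sub x (mem_sphere_zero_iff_norm.2 (hsub x hx)) y
    (mem_sphere_zero_iff_norm.2 (hsub y hy))

/-- On any invariant sphere `S_r(0)` with `r` in the set `I` of invariant
radii, `f` is an isometry on each closed ball `V_ρ(c) ⊆ S_r(0)`, and maps
`V_ρ(c)` onto `V_ρ(f(c))`. -/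
theorem stmt16 {K : Type*} [NontriviallyNormedField K] [IsAlgClosed K]
    [IsUltrametricDist K] (a b d z₁ z₂ : K) (hab : a*b ≠ 0) (had : a ≠ d)
    (hsum : z₁ + z₂ = -d) (hprod : z₁ * z₂ = b) (hαβ : ‖z₁‖ ≤ ‖z₂‖)
    (r ρ : ℝ) (c : K)
    (hr : r ∈ (if ‖a‖ < ‖z₂‖ then Set.Ioo (0:ℝ) ‖z₁‖
      else if ‖a‖ = ‖z₂‖ then Set.Ioo (0:ℝ) ‖z₁‖ ∪ Set.Ioo ‖z₁‖ ‖z₂‖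
      else Set.Ioo (0:ℝ) (‖z₁‖*‖z₂‖/‖a‖)))
    (hc : ‖c‖ = r) (hsub : ∀ x : K, ‖x - c‖ ≤ ρ → ‖x‖ = r) :
    (∀ x y : K, ‖x - c‖ ≤ ρ → ‖y - c‖ ≤ ρ →
      ‖(a*x^2 + b*x)/(x^2 + d*x + b) - (a*y^2 + b*y)/(y^2 + d*y + b)‖
        = ‖x - y‖) ∧
    (fun x : K => (a*x^2 + b*x)/(x^2 + d*x + b)) '' Metric.closedBall c ρ
      = Metric.closedBall ((a*c^2 + b*c)/(c^2 + d*c + b)) ρ :=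
  stmt16_general a b d z₁ z₂ hab hsum hprod hαβ r ρ c hr hc hsub
end
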